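/- Fix real constants E, K, n', σ'_f, ε'_f > 0 and b, c < 0, and let φ : (0, ∞) → (0, ∞) be the unique function with CMB(φ(σ)) = RO(SD(σ)) for all σ > 0. Then the function g : ℝ → ℝ defined by g(s) = 1/φ(s) for s > 0 and g(s) = 0 for s ≤ 0 is continuous on all of ℝ. -/

import Mathlib

open Set

/-!
A map `u : X → ℝ` with values in an interval `I` is continuous as soon as `H ∘ u` is, for some
continuous strictly increasing `H` on `I`: such an `H` is a topological embedding of `I`.
Neuber's rule reads `SD s · RO (SD s) = s² / E`, and `σ ↦ σ · RO σ` is continuous and strictly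
increasing on `[0, ∞)`, so `SD` extended by `0` to `s ≤ 0` is continuous. In the reciprocal life
`u = 1 / N` the Coffin–Manson–Basquin law becomes `(σf / E) (u / 2) ^ (-b) + εf (u / 2) ^ (-c)`,
continuous and strictly increasing on `[0, ∞)` with value `0` at `u = 0`; composed with `g` it
gives `RO` of the extended `SD`, hence `g` is continuous.
-/

theorem Continuous.of_comp_strictMonoOn {X α β : Type*} [TopologicalSpace X]
    [ConditionallyCompleteLinearOrder α] [DenselyOrdered α] [TopologicalSpace α] [OrderTopology α]
    [LinearOrder β] [TopologicalSpace β] [OrderTopology β]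
    {I : Set α} [I.OrdConnected] {H : α → β} (hHc : ContinuousOn H I) (hHm : StrictMonoOn H I)
    {u : X → α} (hu : ∀ x, u x ∈ I) (hHu : Continuous (H ∘ u)) : Continuous u := by
  have hrange : (range (I.domRestrict H)).OrdConnected := by
    rw [range_domRestrict]
    exact ((OrdConnected.isPreconnected ‹_›).image H hHc).ordConnected
  have hemb := hHm.domRestrict.isEmbedding_of_ordConnected hrange
  exact continuous_subtype_val.comp
    (hemb.continuous_iff.mpr hHu : Continuous (Set.codRestrict u I hu))

noncomputable def rambergOsgood (E K n' σ : ℝ) : ℝ := σ / E + (σ / K) ^ (1 / n')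

noncomputable def coffinMansonBasquin (E σf εf b c N : ℝ) : ℝ :=
  σf / E * (2 * N) ^ b + εf * (2 * N) ^ c

section RambergOsgood

variable {E K n' : ℝ}

theorem continuous_rambergOsgood (hn : 0 ≤ n') : Continuous (rambergOsgood E K n') :=
  (continuous_id.div_const E).add
    ((continuous_id.div_const K).rpow_const fun _ => Or.inr (by positivity))

theorem rambergOsgood_zero (hn : n' ≠ 0) : rambergOsgood E K n' 0 = 0 := by
  simp [rambergOsgood, hn]

theorem strictMonoOn_rambergOsgood (hE : 0 < E) (hK : 0 ≤ K) (hn : 0 ≤ n') :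
    StrictMonoOn (rambergOsgood E K n') (Ici 0) := by
  intro x hx y _ hxy
  unfold rambergOsgood
  have hpow : (x / K) ^ (1 / n') ≤ (y / K) ^ (1 / n') := by
    have : (0 : ℝ) ≤ x := hx
    gcongr
  exact add_lt_add_of_lt_of_le (div_lt_div_of_pos_right hxy hE) hpow

theorem strictMonoOn_mul_rambergOsgood (hE : 0 < E) (hK : 0 ≤ K) (hn : 0 < n') :
    StrictMonoOn (fun σ => σ * rambergOsgood E K n' σ) (Ici 0) := by
  intro x hx y hy hxy
  have hmono := strictMonoOn_rambergOsgood hE hK hn.le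
  have hy_pos : 0 < rambergOsgood E K n' y := by
    rw [← rambergOsgood_zero (E := E) (K := K) hn.ne']
    exact hmono self_mem_Ici hy (lt_of_le_of_lt hx hxy)
  calc x * rambergOsgood E K n' x ≤ x * rambergOsgood E K n' y :=
        mul_le_mul_of_nonneg_left (hmono.monotoneOn hx hy hxy.le) hx
    _ < y * rambergOsgood E K n' y := mul_lt_mul_of_pos_right hxy hy_pos

theorem continuous_ite_pos_of_neuber (hE : 0 < E) (hK : 0 ≤ K) (hn : 0 < n') {SD : ℝ → ℝ}
    (hSD : ∀ s : ℝ, 0 < s →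
      0 < SD s ∧ (SD s) ^ 2 / E + SD s * (SD s / K) ^ (1 / n') = s ^ 2 / E) :
    Continuous fun s => if 0 < s then SD s else 0 := by
  refine Continuous.of_comp_strictMonoOn (I := Ici (0 : ℝ))
    (H := fun σ => σ * rambergOsgood E K n' σ)
    ((continuous_id.mul (continuous_rambergOsgood hn.le)).continuousOn)
    (strictMonoOn_mul_rambergOsgood hE hK hn) (fun s => ?_) ?_
  · split_ifs with hs
    exacts [(hSD s hs).1.le, self_mem_Ici]
  · have hsq : Continuous fun s : ℝ => max s 0 ^ 2 / E := by fun_prop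
    convert hsq using 1
    funext s
    simp only [Function.comp]
    split_ifs with hs
    · rw [max_eq_left hs.le, ← (hSD s hs).2]
      unfold rambergOsgood
      ring
    · simp [max_eq_right (not_lt.mp hs)]

end RambergOsgood

section CoffinMansonBasquin

variable {E σf εf b c : ℝ}

theorem coffinMansonBasquin_one_div {u : ℝ} (hu : 0 ≤ u) :
    coffinMansonBasquin E σf εf b c (1 / u) = σf / E * (u / 2) ^ (-b) + εf * (u / 2) ^ (-c) := by
  have key : ∀ p : ℝ, (2 * (1 / u)) ^ p = (u / 2) ^ (-p) := fun p => by
    rw [Real.rpow_neg (by positivity), ← Real.inv_rpow (by positivity), inv_div, mul_one_div]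
  rw [coffinMansonBasquin, key, key]

theorem continuousOn_coffinMansonBasquin_one_div (hb : b < 0) (hc : c < 0) :
    ContinuousOn (fun u => coffinMansonBasquin E σf εf b c (1 / u)) (Ici 0) := by
  refine ContinuousOn.congr (f := fun u => σf / E * (u / 2) ^ (-b) + εf * (u / 2) ^ (-c)) ?_
    fun u hu => coffinMansonBasquin_one_div hu
  have hpow : ∀ p : ℝ, p < 0 → Continuous fun u : ℝ => (u / 2) ^ (-p) := fun p hp =>
    (continuous_id.div_const 2).rpow_const fun _ => Or.inr (by linarith)
  exact (((hpow b hb).const_mul _).add ((hpow c hc).const_mul _)).continuousOn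

theorem strictMonoOn_coffinMansonBasquin_one_div (hE : 0 < E) (hσf : 0 < σf) (hεf : 0 < εf)
    (hb : b < 0) (hc : c < 0) :
    StrictMonoOn (fun u => coffinMansonBasquin E σf εf b c (1 / u)) (Ici 0) := by
  intro x hx y hy hxy
  simp only [coffinMansonBasquin_one_div hx, coffinMansonBasquin_one_div hy]
  have hx2 : 0 ≤ x / 2 := by simp only [mem_Ici] at hx; positivity
  have hb' : 0 < -b := neg_pos.mpr hb
  have hc' : 0 < -c := neg_pos.mpr hc
  gcongr

end CoffinMansonBasquin

theorem stmt6 (E K n' σf εf b c : ℝ) (hE : 0 < E) (hK : 0 < K) (hn : 0 < n')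
    (hσf : 0 < σf) (hεf : 0 < εf) (hb : b < 0) (hc : c < 0)
    (RO CMB SD φ : ℝ → ℝ)
    (hRO : ∀ σ : ℝ, RO σ = σ / E + (σ / K) ^ (1 / n'))
    (hCMB : ∀ N : ℝ, CMB N = σf / E * (2 * N) ^ b + εf * (2 * N) ^ c)
    (hSD : ∀ s : ℝ, 0 < s →
      0 < SD s ∧ (SD s) ^ 2 / E + SD s * (SD s / K) ^ (1 / n') = s ^ 2 / E)
    (hφ : ∀ σ : ℝ, 0 < σ → 0 < φ σ ∧ CMB (φ σ) = RO (SD σ))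
    (g : ℝ → ℝ) (hg : ∀ s : ℝ, g s = if 0 < s then 1 / φ s else 0) :
    Continuous g := by
  obtain rfl : RO = rambergOsgood E K n' := funext hRO
  obtain rfl : CMB = coffinMansonBasquin E σf εf b c := funext hCMB
  refine Continuous.of_comp_strictMonoOn (I := Ici (0 : ℝ))
    (continuousOn_coffinMansonBasquin_one_div (E := E) (σf := σf) (εf := εf) hb hc)
    (strictMonoOn_coffinMansonBasquin_one_div hE hσf hεf hb hc) (fun s => ?_) ?_
  · rw [hg]
    split_ifs with hs
    exacts [(one_div_pos.mpr (hφ s hs).1).le, self_mem_Ici]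
  · convert (continuous_rambergOsgood hn.le).comp (continuous_ite_pos_of_neuber hE hK.le hn hSD)
      using 1
    funext s
    simp only [Function.comp, hg]
    split_ifs with hs
    · rw [one_div_one_div, (hφ s hs).2]
    · rw [coffinMansonBasquin_one_div le_rfl, rambergOsgood_zero hn.ne']
      simp [hb.ne, hc.ne]
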